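/- Let D be a converse invariant oriented graph, let S₁ be the set of sources of D (vertices with in-degree 0) and S₂ the set of sinks of D (vertices with out-degree 0). Then ∑_{v ∈ S₁} 2^{d⁺(v)} = ∑_{v ∈ S₂} 2^{d⁻(v)}. -/

import Mathlib

open Finset Polynomial

/-- An oriented graph: loopless, at most one arc between any pair of vertices. -/
def IsOrgraph {V : Type*} (A : V → V → Prop) : Prop :=
  ∀ u v, A u v → u ≠ v ∧ ¬ A v u

/-- A tournament: loopless, exactly one arc between any two distinct vertices. -/
def IsTournament {W : Type*} (B : W → W → Prop) : Prop :=
  (∀ v, ¬ B v v) ∧ ∀ u v, u ≠ v → (B u v ↔ ¬ B v u)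

/-- The number of subdigraphs of `B` isomorphic to `A`: a subdigraph is a pair of a
vertex set and an arc relation contained in `B` with all endpoints in the vertex set. -/
noncomputable def copyCount {V W : Type*} (A : V → V → Prop) (B : W → W → Prop) : ℕ :=
  Nat.card {p : Set W × (W → W → Prop) //
    (∀ a b, p.2 a b → B a b ∧ a ∈ p.1 ∧ b ∈ p.1) ∧
    ∃ e : V ≃ p.1, ∀ a b, A a b ↔ p.2 (e a : W) (e b : W)}

/-- `A` is converse invariant: every finite tournament contains as many copies of `A`
as of its converse. -/
def ConverseInvariant {V : Type*} (A : V → V → Prop) : Prop :=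
  ∀ (W : Type) (_ : Fintype W) (B : W → W → Prop), IsTournament B →
    copyCount A B = copyCount (fun a b => A b a) B

/-- Out-degree. -/
noncomputable def outDeg {V : Type*} (A : V → V → Prop) (u : V) : ℕ :=
  Nat.card {v // A u v}

/-- In-degree. -/
noncomputable def inDeg {V : Type*} (A : V → V → Prop) (u : V) : ℕ :=
  Nat.card {v // A v u}

/-- The polynomial `P_D(x) = ∑_u (1+x)^{d⁺(u)} (1-x)^{d⁻(u)}`. -/
noncomputable def degPoly {V : Type*} [Fintype V] (A : V → V → Prop) : Polynomial ℤ :=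
  ∑ u : V, (1 + X) ^ outDeg A u * (1 - X) ^ inDeg A u

/-- `A` is an orientation of the simple graph `G`. -/
def IsOrientation {V : Type*} (G : SimpleGraph V) (A : V → V → Prop) : Prop :=
  (∀ u v, A u v → ¬ A v u) ∧ ∀ u v, G.Adj u v ↔ (A u v ∨ A v u)

/-!
For a tournament `T` let `T⁺` be `T` with a new vertex dominating all others. An embedding of
`D` into `T⁺` either avoids the new vertex, or sends a source `v` of `D` to it and is then an
embedding of `D - v` into `T`. Embeddings of `D` into a tournament number `|Aut D|` times its
copies, and `Aut D = Aut (-D)`, so converse invariance applied to `T` and `T⁺` shows that `D` and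
`-D` have equally many embeddings through the new vertex. Averaging over all tournaments `T` on
`n = |D|` vertices, a fixed injection of `D - v` is an embedding with probability
`2 ^ (d⁺(v) - e(D))`, so the average number of such embeddings is
`n! 2 ^ (-e(D)) ∑_{v source} 2 ^ d⁺(v)` for `D`, and the same with sinks and in-degrees for `-D`.
-/

open Function

section

variable {V W : Type*}

def ArcEmb (A : V → V → Prop) (B : W → W → Prop) : Type _ :=
  {f : V ↪ W // ∀ a b, A a b → B (f a) (f b)}

@[ext]
lemma ArcEmb.ext {A : V → V → Prop} {B : W → W → Prop} {f g : ArcEmb A B}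
    (h : ∀ a, f.1 a = g.1 a) : f = g :=
  Subtype.ext (DFunLike.ext _ _ h)

instance [Finite V] [Finite W] (A : V → V → Prop) (B : W → W → Prop) : Finite (ArcEmb A B) :=
  Subtype.finite

def Copy (A : V → V → Prop) (B : W → W → Prop) : Type _ :=
  {p : Set W × (W → W → Prop) //
    (∀ a b, p.2 a b → B a b ∧ a ∈ p.1 ∧ b ∈ p.1) ∧
    ∃ e : V ≃ p.1, ∀ a b, A a b ↔ p.2 (e a : W) (e b : W)}

namespace Copy

variable {A : V → V → Prop} {B : W → W → Prop}

def rel (c : Copy A B) : c.1.1 → c.1.1 → Prop := fun x y => c.1.2 x y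

noncomputable def iso (c : Copy A B) : A ≃r c.rel :=
  ⟨c.2.2.choose, fun {a b} => (c.2.2.choose_spec a b).symm⟩

def emb (c : Copy A B) (e : A ≃r c.rel) : ArcEmb A B :=
  ⟨⟨fun a => e a, Subtype.val_injective.comp e.injective⟩,
    fun _ _ h => (c.2.1 _ _ (e.map_rel_iff.2 h)).1⟩

end Copy

namespace ArcEmb

variable {A : V → V → Prop} {B : W → W → Prop}

def image (f : ArcEmb A B) (x y : W) : Prop := ∃ a b, A a b ∧ f.1 a = x ∧ f.1 b = y

lemma image_apply_iff (f : ArcEmb A B) (a b : V) : f.image (f.1 a) (f.1 b) ↔ A a b :=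
  ⟨fun ⟨a', b', h, ha, hb⟩ => by rwa [← f.1.injective ha, ← f.1.injective hb],
    fun h => ⟨a, b, h, rfl, rfl⟩⟩

noncomputable def copy (f : ArcEmb A B) : Copy A B :=
  ⟨(Set.range f.1, f.image), by
    rintro _ _ ⟨a, b, hab, rfl, rfl⟩
    exact ⟨f.2 a b hab, ⟨a, rfl⟩, ⟨b, rfl⟩⟩,
   Equiv.ofInjective f.1 f.1.injective, fun a b => (f.image_apply_iff a b).symm⟩

noncomputable def isoCopy (f : ArcEmb A B) : A ≃r f.copy.rel :=
  ⟨Equiv.ofInjective f.1 f.1.injective, f.image_apply_iff _ _⟩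

end ArcEmb

lemma Copy.copy_emb {A : V → V → Prop} {B : W → W → Prop} (c : Copy A B) (e : A ≃r c.rel) :
    (c.emb e).copy = c := by
  refine Subtype.ext (Prod.ext ?_ ?_)
  · ext x
    refine ⟨?_, fun hx => ⟨e.symm ⟨x, hx⟩, by simp [emb]⟩⟩
    rintro ⟨a, rfl⟩
    exact (e a).2
  · funext x y
    refine propext ⟨?_, fun h => ?_⟩
    · rintro ⟨a, b, hab, rfl, rfl⟩
      exact e.map_rel_iff.2 hab
    · obtain ⟨-, hx, hy⟩ := c.2.1 x y h
      exact ⟨e.symm ⟨x, hx⟩, e.symm ⟨y, hy⟩, e.symm.map_rel_iff.2 h, by simp [emb], by simp [emb]⟩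

theorem card_arcEmb (A : V → V → Prop) (B : W → W → Prop) :
    Nat.card (ArcEmb A B) = copyCount A B * Nat.card (A ≃r A) := by
  rw [copyCount, ← Nat.card_prod]
  symm
  refine Nat.card_congr (Equiv.ofBijective
    (fun p : Copy A B × (A ≃r A) => Copy.emb p.1 (p.2.trans (Copy.iso p.1))) ⟨?_, fun f => ?_⟩)
  · intro p q h
    obtain ⟨c, σ⟩ := p
    obtain ⟨c', σ'⟩ := q
    have hc := congrArg ArcEmb.copy h
    rw [Copy.copy_emb, Copy.copy_emb] at hc
    subst hc
    have : σ.trans (Copy.iso c) = σ'.trans (Copy.iso c) :=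
      RelIso.ext fun a => Subtype.ext (congrArg (fun f : ArcEmb A B => f.1 a) h)
    rw [RelIso.ext fun a => (Copy.iso c).injective (congrArg (· a) this)]
  · refine ⟨(f.copy, f.isoCopy.trans (Copy.iso f.copy).symm), ?_⟩
    ext a
    simp [Copy.emb]
    rfl

lemma IsOrgraph.swap {A : V → V → Prop} (hA : IsOrgraph A) : IsOrgraph (swap A) :=
  fun u v h => ⟨(hA v u h).1.symm, (hA v u h).2⟩

lemma IsOrgraph.subrel {A : V → V → Prop} (hA : IsOrgraph A) (p : V → Prop) :
    IsOrgraph (Subrel A p) :=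
  fun a b h => ⟨fun hab => (hA a b h).1 (congrArg Subtype.val hab), (hA a b h).2⟩

lemma ConverseInvariant.card_arcEmb {A : V → V → Prop} (hCI : ConverseInvariant A)
    {W : Type} [Fintype W] {T : W → W → Prop} (hT : IsTournament T) :
    Nat.card (ArcEmb A T) = Nat.card (ArcEmb (swap A) T) := by
  rw [_root_.card_arcEmb, _root_.card_arcEmb, hCI W ‹_› T hT,
    Nat.card_congr ⟨RelIso.swap, RelIso.swap, fun _ => rfl, fun _ => rfl⟩]

def addSource (T : W → W → Prop) : Option W → Option W → Prop
  | none, some _ => True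
  | some x, some y => T x y
  | _, none => False

@[simp] lemma addSource_some_some (T : W → W → Prop) (x y : W) :
    addSource T (some x) (some y) ↔ T x y := Iff.rfl

@[simp] lemma addSource_none_some (T : W → W → Prop) (y : W) : addSource T none (some y) :=
  trivial

@[simp] lemma not_addSource_none (T : W → W → Prop) (x : Option W) : ¬ addSource T x none := by
  cases x <;> exact id

lemma IsTournament.addSource {T : W → W → Prop} (hT : IsTournament T) :
    IsTournament (addSource T) := by
  refine ⟨fun x => ?_, fun x y hxy => ?_⟩
  · cases x
    · exact id
    · exact hT.1 _
  · cases x <;> cases y <;> simp_all [hT.2]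

namespace ArcEmb

variable {A : V → V → Prop} {T : W → W → Prop}

def avoidNoneEquiv (A : V → V → Prop) (T : W → W → Prop) :
    {f : ArcEmb A (addSource T) // ∀ a, f.1 a ≠ none} ≃ ArcEmb A T where
  toFun f := ⟨⟨fun a => (f.1.1 a).get (Option.isSome_iff_ne_none.2 (f.2 a)),
    fun a b h => f.1.1.injective (Option.get_inj.1 h)⟩, fun a b hab => by
      have := f.1.2 a b hab
      rwa [← Option.some_get (Option.isSome_iff_ne_none.2 (f.2 a)),
        ← Option.some_get (Option.isSome_iff_ne_none.2 (f.2 b))] at this⟩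
  invFun g := ⟨⟨g.1.trans .some, fun a b hab => g.2 a b hab⟩, fun _ => Option.some_ne_none _⟩
  left_inv f := Subtype.ext (ArcEmb.ext fun _ => Option.some_get _)
  right_inv g := ArcEmb.ext fun _ => rfl

@[simp] lemma some_avoidNoneEquiv_apply (f : {f : ArcEmb A (addSource T) // ∀ a, f.1 a ≠ none})
    (a : V) : some ((avoidNoneEquiv A T f).1 a) = f.1.1 a :=
  Option.some_get _

lemma ne_none_of_apply_eq_none {v : V} (f : ArcEmb A (addSource T)) (hf : f.1 v = none)
    (a : {a // a ≠ v}) : f.1 a ≠ none :=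
  fun h => a.2 (f.1.injective (h.trans hf.symm))

def extendNone [DecidableEq V] {v : V} (hv : ∀ b, ¬ A b v) (h : ArcEmb (Subrel A (· ≠ v)) T) :
    ArcEmb A (addSource T) := by
  refine ⟨⟨fun a => if ha : a = v then none else some (h.1 ⟨a, ha⟩), fun a b hab => ?_⟩,
    fun a b hab => ?_⟩
  · by_cases ha : a = v <;> by_cases hb : b = v <;> simp_all
  · have hb : b ≠ v := fun hb => hv a (hb ▸ hab)
    by_cases ha : a = v
    · simp [ha, hb]
    · simpa [ha, hb] using h.2 ⟨a, ha⟩ ⟨b, hb⟩ hab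

def noneEquiv [DecidableEq V] {v : V} (hv : ∀ b, ¬ A b v) (T : W → W → Prop) :
    {f : ArcEmb A (addSource T) // f.1 v = none} ≃ ArcEmb (Subrel A (· ≠ v)) T where
  toFun f := avoidNoneEquiv _ T
    ⟨⟨(Embedding.subtype _).trans f.1.1, fun a b hab => f.1.2 a b hab⟩,
      f.1.ne_none_of_apply_eq_none f.2⟩
  invFun h := ⟨extendNone hv h, dif_pos rfl⟩
  left_inv f := by
    refine Subtype.ext (ArcEmb.ext fun a => ?_)
    by_cases ha : a = v
    · subst ha; simp [extendNone, f.2]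
    · simp [extendNone, ha]
  right_inv h := ArcEmb.ext fun a => Option.some_injective _ (by simp [extendNone, a.2])

lemma isEmpty_of_apply_eq_none {b v : V} (hbv : A b v) (T : W → W → Prop) :
    IsEmpty {f : ArcEmb A (addSource T) // f.1 v = none} :=
  ⟨fun f => not_addSource_none T _ (f.2 ▸ f.1.2 b v hbv)⟩

end ArcEmb

lemma card_arcEmb_addSource [Fintype V] [Finite W] (A : V → V → Prop) (T : W → W → Prop) :
    Nat.card (ArcEmb A (addSource T)) =
      Nat.card (ArcEmb A T) + ∑ v, Nat.card {f : ArcEmb A (addSource T) // f.1 v = none} := by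
  classical
  have hinv (f : ArcEmb A (addSource T)) v : partialInv f.1 none = some v ↔ f.1 v = none :=
    f.1.injective.isPartialInv v none
  rw [← Nat.card_congr (Equiv.sigmaFiberEquiv fun f : ArcEmb A (addSource T) => partialInv f.1 none),
    Nat.card_sigma, Fintype.sum_option]
  congr 1
  · refine Nat.card_congr ((Equiv.subtypeEquivRight fun f => ?_).trans (ArcEmb.avoidNoneEquiv A T))
    simp only [Option.eq_none_iff_forall_ne_some, hinv, ne_eq]
  · exact sum_congr rfl fun v _ => Nat.card_congr (Equiv.subtypeEquivRight (hinv · v))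

lemma inDeg_eq_zero_iff [Finite V] {A : V → V → Prop} {v : V} : inDeg A v = 0 ↔ ∀ b, ¬ A b v := by
  rw [inDeg, Finite.card_eq_zero_iff, isEmpty_subtype]

lemma sum_card_arcEmb_addSource_eq_none [Fintype V] [Finite W] (A : V → V → Prop)
    (T : W → W → Prop) :
    ∑ v, Nat.card {f : ArcEmb A (addSource T) // f.1 v = none} =
      ∑ v ∈ univ.filter (fun v => inDeg A v = 0), Nat.card (ArcEmb (Subrel A (· ≠ v)) T) := by
  classical
  rw [sum_filter]
  refine sum_congr rfl fun v _ => ?_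
  split_ifs with hv
  · exact Nat.card_congr (ArcEmb.noneEquiv (inDeg_eq_zero_iff.1 hv) T)
  · obtain ⟨b, hbv⟩ := not_forall_not.1 (mt inDeg_eq_zero_iff.2 hv)
    have := ArcEmb.isEmpty_of_apply_eq_none hbv T
    exact Nat.card_of_isEmpty

lemma ConverseInvariant.sum_card_arcEmb_addSource_eq_none [Fintype V] {A : V → V → Prop}
    (hCI : ConverseInvariant A) {W : Type} [Fintype W] {T : W → W → Prop} (hT : IsTournament T) :
    ∑ v, Nat.card {f : ArcEmb A (addSource T) // f.1 v = none} =
      ∑ v, Nat.card {f : ArcEmb (swap A) (addSource T) // f.1 v = none} := by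
  have h := card_arcEmb_addSource A T
  rwa [hCI.card_arcEmb hT.addSource, hCI.card_arcEmb hT, card_arcEmb_addSource,
    Nat.add_left_cancel_iff, eq_comm] at h

noncomputable def arcCount (A : V → V → Prop) : ℕ := Nat.card {p : V × V // A p.1 p.2}

lemma arcCount_swap (A : V → V → Prop) : arcCount (swap A) = arcCount A :=
  Nat.card_congr ((Equiv.prodComm V V).subtypeEquiv fun _ => Iff.rfl)

lemma arcCount_eq_sum_outDeg [Fintype V] (A : V → V → Prop) : arcCount A = ∑ a, outDeg A a := by
  rw [arcCount, Nat.card_congr (Equiv.subtypeProdEquivSigmaSubtype fun a b => A a b),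
    Nat.card_sigma]
  rfl

lemma arcCount_eq_arcCount_subrel_add_outDeg [Fintype V] {A : V → V → Prop} {v : V}
    (hv : ∀ b, ¬ A b v) : arcCount A = arcCount (Subrel A (· ≠ v)) + outDeg A v := by
  classical
  rw [arcCount_eq_sum_outDeg, arcCount_eq_sum_outDeg, Fintype.sum_eq_add_sum_subtype_ne _ v,
    add_comm]
  congr 1
  refine sum_congr rfl fun a _ => Nat.card_congr (Equiv.subtypeSubtypeEquivSubtype ?_).symm
  rintro b hab rfl
  exact hv a hab

lemma card_subtype_comp_eq_mul {ι κ β : Type*} (π : ι ↪ κ)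
    (c : ι → β) :
    Nat.card {g : κ → β // ∀ i, g (π i) = c i} * Nat.card (ι → β) = Nat.card (κ → β) := by
  classical
  let e : ι ⊕ ↥(Set.range π)ᶜ ≃ κ :=
    (Equiv.sumCongr (Equiv.ofInjective π π.injective) (Equiv.refl _)).trans (Equiv.Set.sumCompl _)
  let E : (κ → β) ≃ (ι → β) × (↥(Set.range π)ᶜ → β) :=
    (e.arrowCongr (Equiv.refl β)).symm.trans (Equiv.sumArrowEquivProdArrow _ _ _)
  have hE : {g : κ → β // ∀ i, g (π i) = c i} ≃ {p : (ι → β) × (↥(Set.range π)ᶜ → β) // p.1 = c} :=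
    E.subtypeEquiv fun g => by simp [E, e, funext_iff]
  rw [Nat.card_congr (hE.trans (Equiv.prodSubtypeFstEquivSubtypeProd (p := (· = c)))),
    Nat.card_congr E, Nat.card_prod, Nat.card_prod, Nat.card_unique, one_mul, mul_comm]

lemma sum_card_subtype_comm {α β : Type*} [Fintype α] [Fintype β] (P : α → β → Prop) :
    ∑ a, Nat.card {b // P a b} = ∑ b, Nat.card {a // P a b} := by
  classical
  simp only [Nat.card_eq_fintype_card, Fintype.card_subtype, card_filter]
  exact sum_comm

section RandomTournament

variable [LinearOrder W]

/-- Every tournament on `W` is `tournamentOf g` for the same number of `g` (the values on the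
diagonal of `Sym2 W` are ignored), so summing over `g` averages over all tournaments. -/
def tournamentOf (g : Sym2 W → Bool) (x y : W) : Prop := x ≠ y ∧ g s(x, y) = decide (x < y)

lemma isTournament_tournamentOf (g : Sym2 W → Bool) : IsTournament (tournamentOf g) := by
  refine ⟨fun x h => h.1 rfl, fun x y hxy => ?_⟩
  rw [tournamentOf, tournamentOf, Sym2.eq_swap]
  rcases hxy.lt_or_gt with h | h <;> cases g s(x, y) <;> simp [h, h.not_gt, hxy, hxy.symm]

lemma card_tournamentOf_mul [Finite V] [Finite W] {A : V → V → Prop} (hA : IsOrgraph A)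
    (h : V ↪ W) :
    Nat.card {g : Sym2 W → Bool // ∀ a b, A a b → tournamentOf g (h a) (h b)} * 2 ^ arcCount A =
      2 ^ Nat.card (Sym2 W) := by
  let π : {p : V × V // A p.1 p.2} ↪ Sym2 W := ⟨fun p => s(h p.1.1, h p.1.2), by
    rintro ⟨⟨a, b⟩, hab⟩ ⟨⟨a', b'⟩, hab'⟩ he
    rcases Sym2.eq_iff.1 he with ⟨ha, hb⟩ | ⟨ha, hb⟩
    · obtain rfl : a = a' := h.injective ha
      obtain rfl : b = b' := h.injective hb
      rfl
    · obtain rfl : a = b' := h.injective ha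
      obtain rfl : b = a' := h.injective hb
      exact ((hA _ _ hab).2 hab').elim⟩
  have hcond (g : Sym2 W → Bool) : (∀ a b, A a b → tournamentOf g (h a) (h b)) ↔
      ∀ p, g (π p) = decide (h p.1.1 < h p.1.2) :=
    ⟨fun H p => (H _ _ p.2).2, fun H a b hab =>
      ⟨h.injective.ne (hA a b hab).1, H ⟨(a, b), hab⟩⟩⟩
  have := card_subtype_comp_eq_mul π fun p => decide (h p.1.1 < h p.1.2)
  rw [Nat.card_fun, Nat.card_fun, Nat.card_eq_fintype_card (α := Bool), Fintype.card_bool,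
    ← Nat.card_congr (Equiv.subtypeEquivRight hcond)] at this
  exact this

variable [Fintype V] [Fintype W]

lemma sum_card_arcEmb_tournamentOf_mul {A : V → V → Prop} (hA : IsOrgraph A) :
    (∑ g : Sym2 W → Bool, Nat.card (ArcEmb A (tournamentOf g))) * 2 ^ arcCount A =
      Nat.card (V ↪ W) * 2 ^ Nat.card (Sym2 W) := by
  classical
  unfold ArcEmb
  rw [sum_card_subtype_comm (fun g (h : V ↪ W) => ∀ a b, A a b → tournamentOf g (h a) (h b)),
    sum_mul, sum_congr rfl fun h _ => card_tournamentOf_mul hA h, sum_const, card_univ,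
    smul_eq_mul, Nat.card_eq_fintype_card (α := V ↪ W)]

lemma sum_sum_card_arcEmb_addSource_eq_none_mul {A : V → V → Prop} (hA : IsOrgraph A) :
    (∑ g : Sym2 W → Bool, ∑ v,
        Nat.card {f : ArcEmb A (addSource (tournamentOf g)) // f.1 v = none}) * 2 ^ arcCount A =
      (Fintype.card W).descFactorial (Fintype.card V - 1) * 2 ^ Nat.card (Sym2 W) *
        ∑ v ∈ univ.filter (fun v => inDeg A v = 0), 2 ^ outDeg A v := by
  classical
  simp only [sum_card_arcEmb_addSource_eq_none]
  rw [sum_comm, sum_mul, mul_sum]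
  refine sum_congr rfl fun v hv => ?_
  have hv : ∀ b, ¬ A b v := inDeg_eq_zero_iff.1 (mem_filter.1 hv).2
  rw [arcCount_eq_arcCount_subrel_add_outDeg hv, pow_add, ← mul_assoc,
    sum_card_arcEmb_tournamentOf_mul (hA.subrel _), Nat.card_eq_fintype_card,
    Fintype.card_embedding_eq]
  simp

end RandomTournament

end

/-- For a converse invariant orgraph, the source and sink power sums agree. -/
theorem stmt_1 {V : Type} [Fintype V] (A : V → V → Prop)
    (hA : IsOrgraph A) (hCI : ConverseInvariant A) :
    ∑ v ∈ Finset.univ.filter (fun v => inDeg A v = 0), 2 ^ outDeg A v =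
      ∑ v ∈ Finset.univ.filter (fun v => outDeg A v = 0), 2 ^ inDeg A v := by
  let : LinearOrder V := LinearOrder.lift' _ (Fintype.equivFin V).injective
  have hsources := sum_sum_card_arcEmb_addSource_eq_none_mul (W := V) hA
  have hsinks := sum_sum_card_arcEmb_addSource_eq_none_mul (W := V) hA.swap
  rw [arcCount_swap, ← sum_congr rfl fun g _ =>
    hCI.sum_card_arcEmb_addSource_eq_none (isTournament_tournamentOf (W := V) g)] at hsinks
  refine Nat.eq_of_mul_eq_mul_left ?_ (hsources.symm.trans hsinks)
  exact Nat.mul_pos (Nat.descFactorial_pos.2 (Nat.sub_le _ _)) (by positivity)
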